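/- Let $C_n$ be the cyclic group of order $n$ with generator $e$, and consider the group ring map $\cdot(e-1) \colon \mathbb{Z}[C_n] \to (\mathbb{Z}/n\mathbb{Z})[C_n]$ given by multiplying by $e-1$ and reducing coefficients mod $n$. Then the kernel of this map is exactly the set of elements $Na + nx$ with $a \in \mathbb{Z}$, $x \in \mathbb{Z}[C_n]$, where $N = \sum_{i=0}^{n-1} e^i$. -/

import Mathlib

open MonoidAlgebra

/-- The norm element `N = ∑_{i=0}^{n-1} e^i` of `ℤ[C_n]`. -/
noncomputable def normElt (n : ℕ) [NeZero n] : MonoidAlgebra ℤ (Multiplicative (ZMod n)) :=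
  ∑ g : Multiplicative (ZMod n), MonoidAlgebra.single g 1

/-- The coefficient-reduction ring homomorphism `ℤ[C_n] → (ℤ/nℤ)[C_n]`. -/
noncomputable def reduceMod (n : ℕ) :
    MonoidAlgebra ℤ (Multiplicative (ZMod n)) →+*
      MonoidAlgebra (ZMod n) (Multiplicative (ZMod n)) :=
  MonoidAlgebra.liftNCRingHom
    ((MonoidAlgebra.singleOneRingHom).comp (Int.castRingHom (ZMod n)))
    (MonoidAlgebra.of (ZMod n) (Multiplicative (ZMod n)))
    (fun {_ _} => Commute.all _ _)

/-!
Reducing mod `n`, the coefficient of `x (e - 1)` at `g` is `x (g e⁻¹) - x g`, so `x` lies in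
the kernel exactly when its coefficients are invariant mod `n` under translation by `e`. Since
`e` generates `C_n`, this says all coefficients are congruent to `a = x 1` mod `n`, i.e.
`x - a N` has all its coefficients divisible by `n`.
-/

namespace MonoidAlgebra

lemma coeff_mul_single_sub_one {R G : Type*} [Ring R] [Group G] (x : MonoidAlgebra R G)
    (e g : G) : (x * (single e 1 - 1)).coeff g = x.coeff (g * e⁻¹) - x.coeff g := by
  simp [mul_sub]

lemma exists_eq_zsmul_of_forall_dvd_coeff {G : Type*} {m : ℤ} (x : MonoidAlgebra ℤ G)
    (h : ∀ g, m ∣ x.coeff g) : ∃ c : MonoidAlgebra ℤ G, x = m • c :=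
  ⟨ofCoeff (x.coeff.mapRange (· / m) (Int.zero_ediv m)), by
    ext g; simp [Int.mul_ediv_cancel' (h g)]⟩

end MonoidAlgebra

lemma apply_eq_apply_one_of_apply_mul_eq {G α : Type*} [Group G] {e : G}
    (he : ∀ g, g ∈ Subgroup.zpowers e) {f : G → α} (hf : ∀ g, f (g * e) = f g) (g : G) :
    f g = f 1 := by
  obtain ⟨k, rfl⟩ := Subgroup.mem_zpowers_iff.mp (he g)
  induction k using Int.induction_on with
  | zero => simp
  | succ k ih => rw [zpow_add_one, hf, ih]
  | pred k ih => rw [← ih, ← hf, sub_eq_add_neg, zpow_add, zpow_neg_one, inv_mul_cancel_right]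

lemma mem_zpowers_ofAdd_one (n : ℕ) (g : Multiplicative (ZMod n)) :
    g ∈ Subgroup.zpowers (Multiplicative.ofAdd (1 : ZMod n)) := by
  obtain ⟨k, hk⟩ := ZMod.intCast_surjective (Multiplicative.toAdd g)
  exact ⟨k, by dsimp only; rw [← ofAdd_zsmul, zsmul_one, hk, ofAdd_toAdd]⟩

lemma reduceMod_eq_mapRingHom (n : ℕ) :
    reduceMod n = mapRingHom _ (Int.castRingHom (ZMod n)) := by
  ext <;> simp [reduceMod]

lemma reduceMod_eq_zero_iff {n : ℕ} {x : MonoidAlgebra ℤ (Multiplicative (ZMod n))} :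
    reduceMod n x = 0 ↔ ∀ g, (n : ℤ) ∣ x.coeff g := by
  simp only [MonoidAlgebra.ext_iff, Finsupp.ext_iff, reduceMod_eq_mapRingHom,
    coeff_mapRingHom, coeff_zero, Finsupp.coe_zero, Pi.zero_apply,
    eq_intCast, ZMod.intCast_zmod_eq_zero_iff_dvd]

lemma coeff_normElt (n : ℕ) [NeZero n] (g : Multiplicative (ZMod n)) :
    (normElt n).coeff g = 1 := by
  simp [normElt, coeff_sum, coeff_single, Finsupp.single_apply]

/-- The kernel of the map `ℤ[C_n] → (ℤ/nℤ)[C_n]`, `x ↦ x·(e-1) mod n`, is exactly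
the set of elements `N a + n x`. -/
theorem kernel_mul_sub_one (n : ℕ) [NeZero n]
    (x : MonoidAlgebra ℤ (Multiplicative (ZMod n))) :
    reduceMod n (x * (MonoidAlgebra.single (Multiplicative.ofAdd (1 : ZMod n)) 1 - 1)) = 0 ↔
      ∃ (a : ℤ) (c : MonoidAlgebra ℤ (Multiplicative (ZMod n))),
        x = a • normElt n + (n : ℤ) • c := by
  set e := Multiplicative.ofAdd (1 : ZMod n)
  simp only [reduceMod_eq_zero_iff, coeff_mul_single_sub_one]
  constructor
  · intro h
    have hconst : ∀ g, ((x.coeff g : ℤ) : ZMod n) = x.coeff 1 :=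
      apply_eq_apply_one_of_apply_mul_eq (mem_zpowers_ofAdd_one n) fun g =>
        (ZMod.intCast_eq_intCast_iff_dvd_sub _ _ n).mpr <| by
          simpa only [mul_inv_cancel_right] using h (g * e)
    obtain ⟨c, hc⟩ := (x - x.coeff 1 • normElt n).exists_eq_zsmul_of_forall_dvd_coeff
        (m := n) fun g => by
      simpa only [coeff_sub, coeff_smul_apply, Finsupp.sub_apply,
        coeff_normElt, smul_eq_mul, mul_one] using
        (ZMod.intCast_eq_intCast_iff_dvd_sub _ _ n).mp (hconst g).symm
    exact ⟨x.coeff 1, c, by rw [← hc]; abel⟩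
  · rintro ⟨a, c, rfl⟩ g
    exact ⟨c.coeff (g * e⁻¹) - c.coeff g, by
      simp only [coeff_add, coeff_smul_apply, Finsupp.add_apply,
        coeff_normElt, smul_eq_mul]
      ring⟩
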